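/- arXiv:1708.02930 — 2 statements merged into one kernel-verified Lean document; each statement's English description precedes it below -/
import Mathlib

section
/- If λ ≠ 0 is an eigenvalue of Δ_k (i.e. there exists α ∈ V_k, α ≠ 0, with Δ_k α = λ • α), then λ is an eigenvalue of Δ_{k−1} or an eigenvalue of Δ_{k+1}. (Abstract form of: the positive spectrum of the Laplacian on k-forms is contained in the union of the spectra of the Laplacians on (k−1)-forms and (k+1)-forms.) -/
/-!
Since `d ∘ d = 0`, and hence `δ ∘ δ = 0` by adjointness, both `d` and `δ` intertwine the
Laplacians: `d ∘ Δ = Δ ∘ d` and `δ ∘ Δ = Δ ∘ δ`. So for an eigenvector `α` of `Δ_k`, either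
`δ α ≠ 0` is an eigenvector of `Δ_{k-1}`, or `δ α = 0`, in which case `δ (d α) = Δ α = λ α ≠ 0`
makes `d α` an eigenvector of `Δ_{k+1}`.
-/

theorem LinearMap.comp_eq_zero_of_adjoint {𝕜 E F G : Type*} [RCLike 𝕜]
    [NormedAddCommGroup E] [InnerProductSpace 𝕜 E] [NormedAddCommGroup F] [InnerProductSpace 𝕜 F]
    [NormedAddCommGroup G] [InnerProductSpace 𝕜 G]
    {A : E →ₗ[𝕜] F} {B : F →ₗ[𝕜] G} {A' : F →ₗ[𝕜] E} {B' : G →ₗ[𝕜] F}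
    (hA : ∀ x y, inner 𝕜 (A x) y = inner 𝕜 x (A' y))
    (hB : ∀ x y, inner 𝕜 (B x) y = inner 𝕜 x (B' y)) (hBA : B ∘ₗ A = 0) :
    A' ∘ₗ B' = 0 := by
  ext z
  refine ext_inner_left 𝕜 fun w => ?_
  rw [LinearMap.comp_apply, ← hA, ← hB, ← LinearMap.comp_apply B A, hBA]
  simp

theorem LinearMap.apply_eq_smul_of_comp_eq {R M N : Type*} [Semiring R]
    [AddCommMonoid M] [Module R M] [AddCommMonoid N] [Module R N]
    {f : M →ₗ[R] N} {A : Module.End R M} {B : Module.End R N} (h : f ∘ₗ A = B ∘ₗ f)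
    {μ : R} {x : M} (hx : A x = μ • x) : B (f x) = μ • f x := by
  rw [← LinearMap.comp_apply B f, ← h, LinearMap.comp_apply, hx, map_smul]

section Laplacian

variable {R : Type*} [Semiring R] {V : ℤ → Type*} [∀ k, AddCommMonoid (V k)]
  [∀ k, Module R (V k)] {d : ∀ k, V k →ₗ[R] V (k + 1)} {δ : ∀ k, V (k + 1) →ₗ[R] V k}
  {Δ : ∀ k, V k →ₗ[R] V k}

theorem differential_comp_laplacian (hdd : ∀ k, d (k + 1) ∘ₗ d k = 0)
    (hΔ : ∀ k, Δ (k + 1) = δ (k + 1) ∘ₗ d (k + 1) + d k ∘ₗ δ k) (k : ℤ) :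
    d (k + 1) ∘ₗ Δ (k + 1) = Δ (k + 1 + 1) ∘ₗ d (k + 1) := by
  simp only [hΔ, LinearMap.comp_add, LinearMap.add_comp, LinearMap.comp_assoc]
  rw [← LinearMap.comp_assoc (δ k), hdd, hdd]
  simp only [LinearMap.zero_comp, LinearMap.comp_zero, add_zero, zero_add]

theorem codifferential_comp_laplacian (hδδ : ∀ k, δ k ∘ₗ δ (k + 1) = 0)
    (hΔ : ∀ k, Δ (k + 1) = δ (k + 1) ∘ₗ d (k + 1) + d k ∘ₗ δ k) (k : ℤ) :
    δ (k + 1) ∘ₗ Δ (k + 1 + 1) = Δ (k + 1) ∘ₗ δ (k + 1) := by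
  simp only [hΔ, LinearMap.comp_add, LinearMap.add_comp, LinearMap.comp_assoc]
  rw [← LinearMap.comp_assoc (d (k + 1 + 1)), hδδ, hδδ]
  simp only [LinearMap.zero_comp, LinearMap.comp_zero, add_zero, zero_add]

end Laplacian

/-- For a complex `(V_k, d_k)` of inner product spaces with formal adjoints
`δ_k` and Laplacians `Δ_k = δ_k ∘ d_k + d_{k-1} ∘ δ_{k-1}` (encoded by the
defining property `Δ_{k+1} = δ_{k+1} ∘ d_{k+1} + d_k ∘ δ_k` for all `k`):
every nonzero eigenvalue of `Δ_k` is an eigenvalue of `Δ_{k-1}` or of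
`Δ_{k+1}`. -/
theorem positive_spectrum_adjacent
    (V : ℤ → Type*) [∀ k, NormedAddCommGroup (V k)] [∀ k, InnerProductSpace ℂ (V k)]
    (d : ∀ k, V k →ₗ[ℂ] V (k + 1))
    (δ : ∀ k, V (k + 1) →ₗ[ℂ] V k)
    (hdd : ∀ k, d (k + 1) ∘ₗ d k = 0)
    (hadj : ∀ (k : ℤ) (x : V k) (y : V (k + 1)), (inner ℂ (d k x) y : ℂ) = inner ℂ x (δ k y))
    (Δ : ∀ k, V k →ₗ[ℂ] V k)
    (hΔ : ∀ k, Δ (k + 1) = δ (k + 1) ∘ₗ d (k + 1) + d k ∘ₗ δ k)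
    (k : ℤ) (lam : ℂ) (hlam : lam ≠ 0)
    (α : V k) (hα : α ≠ 0) (heig : Δ k α = lam • α) :
    (∃ β : V (k - 1), β ≠ 0 ∧ Δ (k - 1) β = lam • β) ∨
    (∃ γ : V (k + 1), γ ≠ 0 ∧ Δ (k + 1) γ = lam • γ) := by
  have hδδ : ∀ k, δ k ∘ₗ δ (k + 1) = 0 := fun k =>
    LinearMap.comp_eq_zero_of_adjoint (hadj k) (hadj (k + 1)) (hdd k)
  -- With `k = i + 2`, the indices of `d`, `δ` and `hΔ` at `k - 1`, `k`, `k + 1` match syntactically.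
  obtain ⟨i, rfl⟩ : ∃ i, k = i + 1 + 1 := ⟨k - 2, by ring⟩
  rw [show i + 1 + 1 - 1 = i + 1 by ring]
  by_cases hδα : δ (i + 1) α = 0
  · have hδdα : δ (i + 1 + 1) (d (i + 1 + 1) α) = lam • α := by
      simpa [hΔ (i + 1), hδα] using heig
    refine Or.inr ⟨d (i + 1 + 1) α, fun hdα => ?_,
      LinearMap.apply_eq_smul_of_comp_eq (differential_comp_laplacian hdd hΔ (i + 1)) heig⟩
    rw [hdα, map_zero, eq_comm, smul_eq_zero] at hδdα
    exact hδdα.elim hlam hα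
  · exact Or.inl ⟨δ (i + 1) α, hδα,
      LinearMap.apply_eq_smul_of_comp_eq (codifferential_comp_laplacian hδδ hΔ i) heig⟩
end

section
/- Suppose λ ≠ 0, the eigenspaces E_λ(Δ_{p+1,q}) and E_λ(Δ_{p,q+1}) are finite-dimensional, and L : V_{p,q} →ₗ[ℂ] V_{p+1,q+1} is a linear map satisfying L ∘ ∂_{p,q} = ∂_{p+1,q} ∘ L (as maps V_{p,q} → V_{p+1,q+1}), Δ_{p+1,q+1} ∘ L = L ∘ Δ_{p,q}, and L injective on E_λ(Δ_{p,q}). Then E_λ(Δ_{p,q}) is finite-dimensional and dim E_λ(Δ_{p,q}) ≤ dim E_λ(Δ_{p+1,q}) + dim E_λ(Δ_{p,q+1}). (Abstract form of Theorem 2(b): h^{p,q}_λ ≤ h^{p+1,q}_λ + h^{p,q+1}_λ for p + q < n and λ > 0.) -/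
/-!
Write `q = r + 1`. For `λ ≠ 0` the map `α ↦ (∂† (L α), ∂ α)` sends `E_λ(Δ_{p,q})` into
`E_λ(Δ_{p+1,q}) × E_λ(Δ_{p,q+1})`, since `L`, `∂` and `∂†` all commute with the Laplacians
(the last because `∂† ∘ ∂† = 0` is adjoint to `∂ ∘ ∂ = 0`). It is injective: if `∂† (L α) = 0`
and `∂ α = 0`, then also `∂ (L α) = L (∂ α) = 0`, so `L α` is harmonic; being a `λ`-eigenvector
with `λ ≠ 0`, it vanishes, and `L` is injective on the eigenspace.
-/

open Module.End

theorem LinearMap.comp_eq_zero_of_formal_adjoints {𝕜 E F G : Type*} [RCLike 𝕜]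
    [NormedAddCommGroup E] [InnerProductSpace 𝕜 E] [NormedAddCommGroup F] [InnerProductSpace 𝕜 F]
    [NormedAddCommGroup G] [InnerProductSpace 𝕜 G]
    {d₁ : E →ₗ[𝕜] F} {d₂ : F →ₗ[𝕜] G} {d₁' : F →ₗ[𝕜] E} {d₂' : G →ₗ[𝕜] F}
    (h₁ : ∀ x y, inner 𝕜 (d₁ x) y = inner 𝕜 x (d₁' y))
    (h₂ : ∀ x y, inner 𝕜 (d₂ x) y = inner 𝕜 x (d₂' y))
    (h : d₂ ∘ₗ d₁ = 0) : d₁' ∘ₗ d₂' = 0 := by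
  ext z
  refine ext_inner_left 𝕜 fun x => ?_
  rw [LinearMap.comp_apply, ← h₁, ← h₂, ← LinearMap.comp_apply, h, LinearMap.zero_apply,
    LinearMap.zero_apply, inner_zero_left, inner_zero_right]

section Laplacian

variable {R U V W X : Type*} [CommSemiring R] [AddCommMonoid U] [AddCommMonoid V]
  [AddCommMonoid W] [AddCommMonoid X] [Module R U] [Module R V] [Module R W] [Module R X]

theorem laplacian_comp_comm {d₀ : U →ₗ[R] V} {d₁ : V →ₗ[R] W} {d₂ : W →ₗ[R] X}
    (d₀' : V →ₗ[R] U) (d₁' : W →ₗ[R] V) (d₂' : X →ₗ[R] W)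
    (h₁₀ : d₁ ∘ₗ d₀ = 0) (h₂₁ : d₂ ∘ₗ d₁ = 0) :
    (d₂' ∘ₗ d₂ + d₁ ∘ₗ d₁') ∘ₗ d₁ = d₁ ∘ₗ (d₁' ∘ₗ d₁ + d₀ ∘ₗ d₀') := by
  rw [LinearMap.add_comp, LinearMap.comp_add, LinearMap.comp_assoc, h₂₁, LinearMap.comp_zero,
    zero_add, ← LinearMap.comp_assoc d₀', h₁₀, LinearMap.zero_comp, add_zero,
    LinearMap.comp_assoc]

end Laplacian

theorem LinearMap.ker_sub_smul_id_eq_eigenspace {R M : Type*} [CommRing R] [AddCommGroup M]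
    [Module R M] (f : Module.End R M) (μ : R) :
    LinearMap.ker (f - μ • LinearMap.id) = f.eigenspace μ := by
  rw [eigenspace_def]
  rfl

theorem Module.End.apply_mem_eigenspace_of_comp_eq {R M N : Type*} [CommRing R] [AddCommGroup M]
    [AddCommGroup N] [Module R M] [Module R N] {A : End R M} {B : End R N} {f : M →ₗ[R] N}
    (h : B ∘ₗ f = f ∘ₗ A) {μ : R} {x : M} (hx : x ∈ A.eigenspace μ) :
    f x ∈ B.eigenspace μ := by
  rw [mem_eigenspace_iff] at hx ⊢
  rw [← LinearMap.comp_apply, h, LinearMap.comp_apply, hx, map_smul]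

theorem Module.End.eq_zero_of_mem_eigenspace_of_laplacian {K M N₁ N₂ : Type*} [Field K]
    [AddCommGroup M] [AddCommGroup N₁] [AddCommGroup N₂] [Module K M] [Module K N₁] [Module K N₂]
    {a : M →ₗ[K] N₁} (a' : N₁ →ₗ[K] M) (b : N₂ →ₗ[K] M) {b' : M →ₗ[K] N₂} {μ : K} (hμ : μ ≠ 0)
    {x : M} (hx : x ∈ eigenspace (a' ∘ₗ a + b ∘ₗ b') μ) (ha : a x = 0) (hb : b' x = 0) :
    x = 0 := by
  rw [mem_eigenspace_iff, LinearMap.add_apply, LinearMap.comp_apply, LinearMap.comp_apply, ha, hb,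
    map_zero, map_zero, add_zero, eq_comm, smul_eq_zero] at hx
  exact hx.resolve_left hμ

theorem Submodule.finrank_le_add_of_injOn {K M N₁ N₂ : Type*} [Field K] [AddCommGroup M]
    [AddCommGroup N₁] [AddCommGroup N₂] [Module K M] [Module K N₁] [Module K N₂]
    {S : Submodule K M} {S₁ : Submodule K N₁} {S₂ : Submodule K N₂} [FiniteDimensional K S₁]
    [FiniteDimensional K S₂] (f : M →ₗ[K] N₁) (g : M →ₗ[K] N₂)
    (hf : ∀ x ∈ S, f x ∈ S₁) (hg : ∀ x ∈ S, g x ∈ S₂)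
    (hinj : ∀ x ∈ S, f x = 0 → g x = 0 → x = 0) :
    FiniteDimensional K S ∧ Module.finrank K S ≤ Module.finrank K S₁ + Module.finrank K S₂ := by
  let Φ : S →ₗ[K] S₁ × S₂ := (f.restrict hf).prod (g.restrict hg)
  have hΦ : Function.Injective Φ := by
    refine (injective_iff_map_eq_zero Φ).mpr fun x hx => Subtype.ext ?_
    exact hinj x x.2 (congrArg Subtype.val (congrArg Prod.fst hx))
      (congrArg Subtype.val (congrArg Prod.snd hx))
  refine ⟨FiniteDimensional.of_injective Φ hΦ, ?_⟩
  simpa only [Module.finrank_prod] using LinearMap.finrank_le_finrank_of_injective hΦ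

/-- Abstract form of Theorem 2(b): for a doubly graded family `(V_{p,q})` with
square-zero maps `∂_{p,q} : V_{p,q} → V_{p,q+1}`, formal adjoints `∂†_{p,q}`,
Laplacians `Δ_{p,q} = ∂†_{p,q} ∘ ∂_{p,q} + ∂_{p,q-1} ∘ ∂†_{p,q-1}` (encoded by
the defining property at all indices), and a Lefschetz-type family of maps
`L_{p,q} : V_{p,q} → V_{p+1,q+1}` commuting with `∂` and `Δ`: if `λ ≠ 0`,
`L` is injective on `E_λ(Δ_{p,q})`, and `E_λ(Δ_{p+1,q})`, `E_λ(Δ_{p,q+1})` are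
finite dimensional, then `E_λ(Δ_{p,q})` is finite dimensional and
`dim E_λ(Δ_{p,q}) ≤ dim E_λ(Δ_{p+1,q}) + dim E_λ(Δ_{p,q+1})`. -/
theorem hodge_multiplicity_ineq
    (V : ℤ → ℤ → Type*) [∀ p q, NormedAddCommGroup (V p q)]
    [∀ p q, InnerProductSpace ℂ (V p q)]
    (dbar : ∀ p q, V p q →ₗ[ℂ] V p (q + 1))
    (dbar' : ∀ p q, V p (q + 1) →ₗ[ℂ] V p q)
    (hdd : ∀ p q, dbar p (q + 1) ∘ₗ dbar p q = 0)
    (hadj : ∀ (p q : ℤ) (x : V p q) (y : V p (q + 1)),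
      (inner ℂ (dbar p q x) y : ℂ) = inner ℂ x (dbar' p q y))
    (Δ : ∀ p q, V p q →ₗ[ℂ] V p q)
    (hΔ : ∀ p q, Δ p (q + 1) = dbar' p (q + 1) ∘ₗ dbar p (q + 1) + dbar p q ∘ₗ dbar' p q)
    (L : ∀ p q, V p q →ₗ[ℂ] V (p + 1) (q + 1))
    (hLd : ∀ p q, L p (q + 1) ∘ₗ dbar p q = dbar (p + 1) (q + 1) ∘ₗ L p q)
    (hLΔ : ∀ p q, Δ (p + 1) (q + 1) ∘ₗ L p q = L p q ∘ₗ Δ p q)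
    (p q : ℤ) (lam : ℂ) (hlam : lam ≠ 0)
    (hLinj : ∀ α : V p q, Δ p q α = lam • α → L p q α = 0 → α = 0)
    (h1 : FiniteDimensional ℂ (LinearMap.ker (Δ (p + 1) q - lam • LinearMap.id)))
    (h2 : FiniteDimensional ℂ (LinearMap.ker (Δ p (q + 1) - lam • LinearMap.id))) :
    FiniteDimensional ℂ (LinearMap.ker (Δ p q - lam • LinearMap.id)) ∧
    Module.finrank ℂ (LinearMap.ker (Δ p q - lam • LinearMap.id)) ≤
      Module.finrank ℂ (LinearMap.ker (Δ (p + 1) q - lam • LinearMap.id)) +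
      Module.finrank ℂ (LinearMap.ker (Δ p (q + 1) - lam • LinearMap.id)) := by
  obtain ⟨r, rfl⟩ : ∃ r, q = r + 1 := ⟨q - 1, by ring⟩
  rw [LinearMap.ker_sub_smul_id_eq_eigenspace] at h1 h2
  rw [LinearMap.ker_sub_smul_id_eq_eigenspace, LinearMap.ker_sub_smul_id_eq_eigenspace,
    LinearMap.ker_sub_smul_id_eq_eigenspace]
  have hd'd' (p q : ℤ) : dbar' p q ∘ₗ dbar' p (q + 1) = 0 :=
    LinearMap.comp_eq_zero_of_formal_adjoints (hadj p q) (hadj p (q + 1)) (hdd p q)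
  have hΔd : Δ p (r + 1 + 1) ∘ₗ dbar p (r + 1) = dbar p (r + 1) ∘ₗ Δ p (r + 1) := by
    rw [hΔ, hΔ]
    exact laplacian_comp_comm _ _ _ (hdd p r) (hdd p (r + 1))
  have hΔd' : Δ (p + 1) (r + 1) ∘ₗ dbar' (p + 1) (r + 1) =
      dbar' (p + 1) (r + 1) ∘ₗ Δ (p + 1) (r + 1 + 1) := by
    rw [hΔ, hΔ, add_comm (dbar' (p + 1) (r + 1) ∘ₗ _),
      add_comm (dbar' (p + 1) (r + 1 + 1) ∘ₗ _)]
    exact laplacian_comp_comm _ _ _ (hd'd' (p + 1) (r + 1)) (hd'd' (p + 1) r)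
  refine Submodule.finrank_le_add_of_injOn (dbar' (p + 1) (r + 1) ∘ₗ L p (r + 1))
    (dbar p (r + 1)) (fun x hx => apply_mem_eigenspace_of_comp_eq hΔd'
      (apply_mem_eigenspace_of_comp_eq (hLΔ p (r + 1)) hx))
    (fun x hx => apply_mem_eigenspace_of_comp_eq hΔd hx) fun x hx hd'L hd => ?_
  rw [LinearMap.comp_apply] at hd'L
  have hLx := apply_mem_eigenspace_of_comp_eq (hLΔ p (r + 1)) hx
  rw [hΔ] at hLx
  have hdL : dbar (p + 1) (r + 1 + 1) (L p (r + 1) x) = 0 := by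
    rw [← LinearMap.comp_apply, ← hLd, LinearMap.comp_apply, hd, map_zero]
  exact hLinj x (mem_eigenspace_iff.mp hx)
    (eq_zero_of_mem_eigenspace_of_laplacian _ _ hlam hLx hdL hd'L)
end
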